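/- Let m₁₁⁺, m₁₁⁻, m₁₂⁺, m₁₂⁻, m₂₁⁺, m₂₁⁻ be arbitrary real numbers. Define a_±(θ) = (e^{m₁₁⁺θ} ± e^{m₁₁⁻θ})/2, b_±(θ) = (e^{m₁₂⁺θ} ± e^{m₁₂⁻θ})/2, c_±(θ) = (e^{m₂₁⁺θ} ± e^{m₂₁⁻θ})/2, and let R̂(θ) be the 9×9 matrix with rows [a₊,0,0,0,0,0,0,0,a₋], [0,b₊,0,0,0,0,0,b₋,0], [0,0,a₊,0,0,0,a₋,0,0], [0,0,0,c₊,0,c₋,0,0,0], [0,0,0,0,1,0,0,0,0], [0,0,0,c₋,0,c₊,0,0,0], [0,0,a₋,0,0,0,a₊,0,0], [0,b₋,0,0,0,0,0,b₊,0], [a₋,0,0,0,0,0,0,0,a₊]. Then R̂ satisfies the braid equation R̂₁₂(θ) R̂₂₃(θ+θ′) R̂₁₂(θ′) = R̂₂₃(θ′) R̂₁₂(θ+θ′) R̂₂₃(θ) for all real θ, θ′, where R̂₁₂(θ) = R̂(θ)⊗I₃ and R̂₂₃(θ) = I₃⊗R̂(θ) as 27×27 matrices. -/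

import Mathlib

open Matrix Kronecker

/-- The 9×9 braid matrix `R̂(θ)` of the `N = 3` case, written on the index set
`Fin 3 × Fin 3` (0-based pairs, ordered lexicographically as the rows/columns of
the 9×9 matrix).  Its nonzero entries sit on the diagonal and the antidiagonal:
`a₊,b₊,a₊,c₊,1,c₊,a₊,b₊,a₊` on the diagonal and `a₋,b₋,a₋,c₋,·,c₋,a₋,b₋,a₋` on
the antidiagonal, where
`a_±(θ) = (e^{m₁₁⁺θ} ± e^{m₁₁⁻θ})/2`, `b_±(θ) = (e^{m₁₂⁺θ} ± e^{m₁₂⁻θ})/2`,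
`c_±(θ) = (e^{m₂₁⁺θ} ± e^{m₂₁⁻θ})/2`. -/
noncomputable def Rhat (m11p m11m m12p m12m m21p m21m : ℝ) (θ : ℝ) :
    Matrix (Fin 3 × Fin 3) (Fin 3 × Fin 3) ℝ :=
  let aP : ℝ := (Real.exp (m11p*θ) + Real.exp (m11m*θ))/2
  let aM : ℝ := (Real.exp (m11p*θ) - Real.exp (m11m*θ))/2
  let bP : ℝ := (Real.exp (m12p*θ) + Real.exp (m12m*θ))/2
  let bM : ℝ := (Real.exp (m12p*θ) - Real.exp (m12m*θ))/2
  let cP : ℝ := (Real.exp (m21p*θ) + Real.exp (m21m*θ))/2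
  let cM : ℝ := (Real.exp (m21p*θ) - Real.exp (m21m*θ))/2
  fun x y =>
    if y = x then
      (if x = ((1, 1) : Fin 3 × Fin 3) then 1
       else if x.1 = 1 then cP else if x.2 = 1 then bP else aP)
    else if y = (2 - x.1, 2 - x.2) then
      (if x.1 = 1 then cM else if x.2 = 1 then bM else aM)
    else 0

/-- Association equivalence `(V⊗V)⊗V ≃ V⊗(V⊗V)` on index sets. -/
def assoc3 : (Fin 3 × Fin 3) × Fin 3 ≃ Fin 3 × Fin 3 × Fin 3 :=
  Equiv.prodAssoc _ _ _

/-- `R̂₁₂(θ) = R̂(θ) ⊗ I₃` as a 27×27 matrix. -/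
noncomputable def R12 (m11p m11m m12p m12m m21p m21m θ : ℝ) :
    Matrix (Fin 3 × Fin 3 × Fin 3) (Fin 3 × Fin 3 × Fin 3) ℝ :=
  Matrix.reindex assoc3 assoc3
    (Rhat m11p m11m m12p m12m m21p m21m θ ⊗ₖ (1 : Matrix (Fin 3) (Fin 3) ℝ))

/-- `R̂₂₃(θ) = I₃ ⊗ R̂(θ)` as a 27×27 matrix. -/
noncomputable def R23 (m11p m11m m12p m12m m21p m21m θ : ℝ) :
    Matrix (Fin 3 × Fin 3 × Fin 3) (Fin 3 × Fin 3 × Fin 3) ℝ :=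
  (1 : Matrix (Fin 3) (Fin 3) ℝ) ⊗ₖ Rhat m11p m11m m12p m12m m21p m21m θ

/-!
Write `R̂(θ) = D₊(θ) + D₋(θ) P`, where `P` permutes the basis by `(i, j) ↦ (2 - i, 2 - j)`
and the diagonal weights `D_±` are invariant under reversing either tensor factor. On each
orbit `{x, P x}` this is the `2 × 2` matrix with eigenvalues `e^{m⁺θ}`, `e^{m⁻θ}` on
`e_x ± e_{P x}`, so `R̂(θ) R̂(θ') = R̂(θ + θ')`. Reversing a single factor commutes with the
weights, so `R̂₁₂(s)` and `R̂₂₃(t)` commute, and both sides of the braid equation equal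
`R̂₁₂(θ + θ') R̂₂₃(θ + θ')`.
-/

namespace Matrix

theorem permMatrix_kronecker_permMatrix {ι κ R : Type*} [DecidableEq ι] [DecidableEq κ]
    [MulZeroOneClass R] (σ : Equiv.Perm ι) (τ : Equiv.Perm κ) :
    σ.permMatrix R ⊗ₖ τ.permMatrix R = Equiv.Perm.permMatrix R (σ.prodCongr τ) := by
  ext x y
  simp only [PEquiv.toMatrix_apply, kroneckerMap_apply, Equiv.toPEquiv_apply, Option.mem_def,
    Option.some.injEq, Equiv.prodCongr_apply, Prod.ext_iff, Prod.map, mul_ite, mul_one, mul_zero]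
  split_ifs <;> simp_all

variable {ι κ R : Type*} [Fintype ι] [DecidableEq ι] [DecidableEq κ] [CommSemiring R]

def twistedDiagonal (σ : Equiv.Perm ι) (g h : ι → R) : Matrix ι ι R :=
  diagonal g + diagonal h * σ.permMatrix R

theorem twistedDiagonal_apply (σ : Equiv.Perm ι) (g h : ι → R) (x y : ι) :
    twistedDiagonal σ g h x y = (if x = y then g x else 0) + if σ x = y then h x else 0 := by
  simp [twistedDiagonal, diagonal_apply, diagonal_mul]

theorem permMatrix_mul_diagonal (σ : Equiv.Perm ι) (f : ι → R) :
    σ.permMatrix R * diagonal f = diagonal (f ∘ σ) * σ.permMatrix R := by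
  ext x y
  simp only [PEquiv.toMatrix_toPEquiv_mul, PEquiv.mul_toMatrix_toPEquiv]
  simp [diagonal_apply, Equiv.eq_symm_apply, eq_comm]

theorem commute_diagonal_permMatrix {σ : Equiv.Perm ι} {f : ι → R} (hf : f ∘ σ = f) :
    Commute (diagonal f) (σ.permMatrix R) := by
  rw [Commute, SemiconjBy, permMatrix_mul_diagonal, hf]

theorem commute_permMatrix {σ τ : Equiv.Perm ι} (h : Commute σ τ) :
    Commute (σ.permMatrix R) (τ.permMatrix R) := by
  rw [Commute, SemiconjBy, ← permMatrix_mul, ← permMatrix_mul, h.eq]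

theorem twistedDiagonal_mul_twistedDiagonal {σ : Equiv.Perm ι} (hσ : σ * σ = 1)
    (g h : ι → R) {g' h' : ι → R} (hg' : g' ∘ σ = g') (hh' : h' ∘ σ = h') :
    twistedDiagonal σ g h * twistedDiagonal σ g' h' =
      twistedDiagonal σ (g * g' + h * h') (g * h' + h * g') := by
  have hP : σ.permMatrix R * σ.permMatrix R = 1 := by rw [← permMatrix_mul, hσ, permMatrix_one]
  have hd : ∀ a b c d : ι → R,
      diagonal (a * b + c * d) = diagonal a * diagonal b + diagonal c * diagonal d := by
    intro a b c d
    rw [diagonal_mul_diagonal, diagonal_mul_diagonal, diagonal_add]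
    rfl
  simp only [twistedDiagonal, add_mul, mul_add, Matrix.mul_assoc,
    (commute_diagonal_permMatrix hg').symm.eq, (commute_diagonal_permMatrix hh').symm.left_comm,
    hP, Matrix.mul_one, hd]
  abel

theorem commute_twistedDiagonal {σ τ : Equiv.Perm ι} (hστ : Commute σ τ) {g h g' h' : ι → R}
    (hg : g ∘ τ = g) (hh : h ∘ τ = h) (hg' : g' ∘ σ = g') (hh' : h' ∘ σ = h') :
    Commute (twistedDiagonal σ g h) (twistedDiagonal τ g' h') := by
  have hd : ∀ f f' : ι → R, Commute (diagonal f) (diagonal f') := commute_diagonal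
  refine .add_left (.add_right (hd _ _) ?_) (.add_right ?_ ?_)
  · exact .mul_right (hd _ _) (commute_diagonal_permMatrix hg)
  · exact .mul_left (hd _ _) (commute_diagonal_permMatrix hg').symm
  · exact .mul_left (.mul_right (hd _ _) (commute_diagonal_permMatrix hh))
      (.mul_right (commute_diagonal_permMatrix hh').symm (commute_permMatrix hστ))

theorem twistedDiagonal_kronecker_one [Fintype κ] (σ : Equiv.Perm ι) (g h : ι → R) :
    twistedDiagonal σ g h ⊗ₖ (1 : Matrix κ κ R) =
      twistedDiagonal (σ.prodCongr (Equiv.refl κ)) (g ∘ Prod.fst) (h ∘ Prod.fst) := by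
  have hD : ∀ f : ι → R, diagonal f ⊗ₖ (1 : Matrix κ κ R) = diagonal (f ∘ Prod.fst) := by
    intro f
    rw [← diagonal_one, diagonal_kronecker_diagonal]
    simp only [mul_one]
    rfl
  rw [twistedDiagonal, twistedDiagonal, add_kronecker, ← Matrix.mul_one (1 : Matrix κ κ R),
    mul_kronecker_mul, Matrix.mul_one, hD, hD, ← permMatrix_refl, permMatrix_kronecker_permMatrix]

theorem one_kronecker_twistedDiagonal [Fintype κ] (σ : Equiv.Perm ι) (g h : ι → R) :
    (1 : Matrix κ κ R) ⊗ₖ twistedDiagonal σ g h =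
      twistedDiagonal ((Equiv.refl κ).prodCongr σ) (g ∘ Prod.snd) (h ∘ Prod.snd) := by
  have hD : ∀ f : ι → R, (1 : Matrix κ κ R) ⊗ₖ diagonal f = diagonal (f ∘ Prod.snd) := by
    intro f
    rw [← diagonal_one, diagonal_kronecker_diagonal]
    simp only [one_mul]
    rfl
  rw [twistedDiagonal, twistedDiagonal, kronecker_add, ← Matrix.mul_one (1 : Matrix κ κ R),
    mul_kronecker_mul, Matrix.mul_one, hD, hD, ← permMatrix_refl, permMatrix_kronecker_permMatrix]

theorem reindex_twistedDiagonal {ι' : Type*} [Fintype ι'] [DecidableEq ι'] (e : ι ≃ ι')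
    (σ : Equiv.Perm ι) (g h : ι → R) :
    reindex e e (twistedDiagonal σ g h) =
      twistedDiagonal (e.permCongr σ) (g ∘ e.symm) (h ∘ e.symm) := by
  ext x y
  simp [twistedDiagonal, PEquiv.mul_toMatrix_toPEquiv, diagonal_apply, Equiv.eq_symm_apply,
    eq_comm]

end Matrix

theorem braid_of_commute {G M : Type*} [AddCommMagma G] [Semigroup M] {A B : G → M}
    (hA : ∀ s t, A s * A t = A (s + t)) (hB : ∀ s t, B s * B t = B (s + t))
    (hAB : ∀ s t, Commute (A s) (B t)) (θ θ' : G) :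
    A θ * B (θ + θ') * A θ' = B θ' * A (θ + θ') * B θ := by
  rw [mul_assoc, ← (hAB θ' _).eq, ← mul_assoc, hA, ← (hAB _ θ').eq, mul_assoc, hB, add_comm θ']

section TwistedExp

open Real

noncomputable def expMean (a b θ : ℝ) : ℝ := (exp (a * θ) + exp (b * θ)) / 2

noncomputable def expHalfDiff (a b θ : ℝ) : ℝ := (exp (a * θ) - exp (b * θ)) / 2

theorem expMean_add (a b s t : ℝ) :
    expMean a b s * expMean a b t + expHalfDiff a b s * expHalfDiff a b t =
      expMean a b (s + t) := by
  simp only [expMean, expHalfDiff, mul_add, exp_add]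
  ring

theorem expHalfDiff_add (a b s t : ℝ) :
    expMean a b s * expHalfDiff a b t + expHalfDiff a b s * expMean a b t =
      expHalfDiff a b (s + t) := by
  simp only [expMean, expHalfDiff, mul_add, exp_add]
  ring

variable {α : Type*} [Fintype α] [DecidableEq α]

noncomputable def twistedExp (τ : Equiv.Perm α) (E : α × α → ℝ × ℝ) (θ : ℝ) :
    Matrix (α × α) (α × α) ℝ :=
  twistedDiagonal (τ.prodCongr τ) (fun x => expMean (E x).1 (E x).2 θ)
    (fun x => expHalfDiff (E x).1 (E x).2 θ)

variable {τ : Equiv.Perm α} {E : α × α → ℝ × ℝ}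

theorem twistedExp_mul (hτ : τ * τ = 1) (hE₁ : ∀ i j, E (τ i, j) = E (i, j))
    (hE₂ : ∀ i j, E (i, τ j) = E (i, j)) (s t : ℝ) :
    twistedExp τ E s * twistedExp τ E t = twistedExp τ E (s + t) := by
  have hσ : τ.prodCongr τ * τ.prodCongr τ = 1 := by
    ext x <;> simp [← Equiv.Perm.mul_apply, hτ]
  have hE : ∀ x, E (τ.prodCongr τ x) = E x := fun x => by
    simp only [Equiv.prodCongr_apply, Prod.map, hE₁, hE₂]
  rw [twistedExp, twistedExp, twistedDiagonal_mul_twistedDiagonal hσ _ _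
    (funext fun x => by simp only [Function.comp_apply, hE])
    (funext fun x => by simp only [Function.comp_apply, hE])]
  congr 1 <;> funext x
  · exact expMean_add _ _ s t
  · exact expHalfDiff_add _ _ s t

theorem commute_twistedExp_kronecker (hE₁ : ∀ i j, E (τ i, j) = E (i, j))
    (hE₂ : ∀ i j, E (i, τ j) = E (i, j)) (s t : ℝ) :
    Commute
      (reindex (Equiv.prodAssoc α α α) (Equiv.prodAssoc α α α)
        (twistedExp τ E s ⊗ₖ (1 : Matrix α α ℝ)))
      ((1 : Matrix α α ℝ) ⊗ₖ twistedExp τ E t) := by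
  rw [twistedExp, twistedExp, twistedDiagonal_kronecker_one, reindex_twistedDiagonal,
    one_kronecker_twistedDiagonal]
  apply commute_twistedDiagonal
  · exact Equiv.ext fun x => rfl
  all_goals funext ⟨i, j, k⟩; simp [hE₁, hE₂]

end TwistedExp

section Rhat

variable (m11p m11m m12p m12m m21p m21m : ℝ)

/-- The centre `(1, 1)` gets exponents `(0, 0)`, i.e. the entries `1` and `0` of `R̂`. -/
def rhatExponents (x : Fin 3 × Fin 3) : ℝ × ℝ :=
  if x = (1, 1) then (0, 0)
  else if x.1 = 1 then (m21p, m21m) else if x.2 = 1 then (m12p, m12m) else (m11p, m11m)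

theorem rhatExponents_rev_fst (i j : Fin 3) :
    rhatExponents m11p m11m m12p m12m m21p m21m (Fin.revPerm i, j) =
      rhatExponents m11p m11m m12p m12m m21p m21m (i, j) := by
  fin_cases i <;> fin_cases j <;> rfl

theorem rhatExponents_rev_snd (i j : Fin 3) :
    rhatExponents m11p m11m m12p m12m m21p m21m (i, Fin.revPerm j) =
      rhatExponents m11p m11m m12p m12m m21p m21m (i, j) := by
  fin_cases i <;> fin_cases j <;> rfl

theorem Rhat_eq_twistedExp (θ : ℝ) :
    Rhat m11p m11m m12p m12m m21p m21m θ =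
      twistedExp Fin.revPerm (rhatExponents m11p m11m m12p m12m m21p m21m) θ := by
  have hrev : ∀ i : Fin 3, 2 - i = i.rev := Fin.last_sub
  ext x y
  rw [twistedExp, twistedDiagonal_apply]
  by_cases hyx : y = x
  · subst hyx
    fin_cases y <;> simp [Rhat, rhatExponents, expMean, expHalfDiff]
  by_cases hy : y = (x.1.rev, x.2.rev)
  · subst hy
    fin_cases x <;> simp_all [Rhat, rhatExponents, expHalfDiff]
  · simp [Rhat, hrev, hyx, hy, Ne.symm hyx, eq_comm (b := y), Prod.map]

theorem twistedExp_rhatExponents_mul (s t : ℝ) :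
    twistedExp Fin.revPerm (rhatExponents m11p m11m m12p m12m m21p m21m) s *
        twistedExp Fin.revPerm (rhatExponents m11p m11m m12p m12m m21p m21m) t =
      twistedExp Fin.revPerm (rhatExponents m11p m11m m12p m12m m21p m21m) (s + t) :=
  twistedExp_mul (Equiv.ext Fin.rev_rev) (rhatExponents_rev_fst _ _ _ _ _ _)
    (rhatExponents_rev_snd _ _ _ _ _ _) s t

theorem R12_mul_R12 (s t : ℝ) :
    R12 m11p m11m m12p m12m m21p m21m s * R12 m11p m11m m12p m12m m21p m21m t =
      R12 m11p m11m m12p m12m m21p m21m (s + t) := by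
  simp only [R12, reindex_apply, submatrix_mul_equiv, ← mul_kronecker_mul, Matrix.mul_one,
    Rhat_eq_twistedExp, twistedExp_rhatExponents_mul]

theorem R23_mul_R23 (s t : ℝ) :
    R23 m11p m11m m12p m12m m21p m21m s * R23 m11p m11m m12p m12m m21p m21m t =
      R23 m11p m11m m12p m12m m21p m21m (s + t) := by
  simp only [R23, ← mul_kronecker_mul, Matrix.mul_one,
    Rhat_eq_twistedExp, twistedExp_rhatExponents_mul]

theorem commute_R12_R23 (s t : ℝ) :
    Commute (R12 m11p m11m m12p m12m m21p m21m s) (R23 m11p m11m m12p m12m m21p m21m t) := by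
  rw [R12, R23, assoc3, Rhat_eq_twistedExp, Rhat_eq_twistedExp]
  exact commute_twistedExp_kronecker (rhatExponents_rev_fst _ _ _ _ _ _)
    (rhatExponents_rev_snd _ _ _ _ _ _) s t

end Rhat

/-- For arbitrary real parameters, `R̂` satisfies the braid equation
`R̂₁₂(θ) R̂₂₃(θ+θ′) R̂₁₂(θ′) = R̂₂₃(θ′) R̂₁₂(θ+θ′) R̂₂₃(θ)`. -/
theorem Rhat_braid (m11p m11m m12p m12m m21p m21m : ℝ) (θ θ' : ℝ) :
    R12 m11p m11m m12p m12m m21p m21m θ *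
      R23 m11p m11m m12p m12m m21p m21m (θ + θ') *
      R12 m11p m11m m12p m12m m21p m21m θ' =
    R23 m11p m11m m12p m12m m21p m21m θ' *
      R12 m11p m11m m12p m12m m21p m21m (θ + θ') *
      R23 m11p m11m m12p m12m m21p m21m θ :=
  braid_of_commute (R12_mul_R12 _ _ _ _ _ _) (R23_mul_R23 _ _ _ _ _ _)
    (commute_R12_R23 _ _ _ _ _ _) θ θ'
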